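/- On the set S(ℝ^N) of nonzero linear subspaces of ℝ^N, define d(V, W) := inf{θ ∈ [0, π/2] : W ⊆ C(V, θ) and V ⊆ C(W, θ)}. Then d is a complete metric on S(ℝ^N); moreover d(V, W) ≤ π/2 for all V, W ∈ S(ℝ^N), and d(V, V^⊥) = π/2 whenever 0 < dim V < N. -/

import Mathlib

open MeasureTheory Filter Set Metric Real
open scoped RealInnerProductSpace ENNReal Topology

noncomputable section

/-- A map is bi-Lipschitz onto its image on `E`: there is `L ≥ 1` with
`L⁻¹ d(x,y) ≤ d(F x, F y) ≤ L d(x,y)` for all `x, y ∈ E`. -/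
def BiLipschitzOn {X Y : Type*} [MetricSpace X] [MetricSpace Y]
    (F : X → Y) (E : Set X) : Prop :=
  ∃ L : ℝ, 1 ≤ L ∧ ∀ x ∈ E, ∀ y ∈ E,
    L⁻¹ * dist x y ≤ dist (F x) (F y) ∧ dist (F x) (F y) ≤ L * dist x y

/-- `f` is Lipschitz on the set `S` (with some constant). -/
def IsLipschitzOn {X Y : Type*} [MetricSpace X] [MetricSpace Y]
    (f : X → Y) (S : Set X) : Prop :=
  ∃ K : NNReal, LipschitzOnWith K f S

/-- `df` is the (Cheeger/Lipschitz) differential of `f` at `x` with respect to the chart map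
`φ`, relative to the ambient set `S`:
`lim_{y → x, y ∈ S} |f y - f x - df ⬝ (φ y - φ x)| / d(y,x) = 0`. -/
def HasChartDerivAt {X : Type*} [MetricSpace X] (S : Set X) {n : ℕ}
    (φ : X → EuclideanSpace ℝ (Fin n)) (f : X → ℝ) (x : X)
    (df : EuclideanSpace ℝ (Fin n)) : Prop :=
  Tendsto (fun y => |f y - f x - ⟪df, φ y - φ x⟫| / dist y x)
    (𝓝[S \ {x}] x) (𝓝 0)

/-- The data `(U i, φ i)` (with dimensions `n i`) is a Lipschitz-differentiability chart
structure for the metric measure space `(S, d, m)`. -/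
structure LDSCharts {X : Type*} [MetricSpace X] [MeasurableSpace X]
    (m : Measure X) (S : Set X) (n : ℕ → ℕ) (U : ℕ → Set X)
    (φ : ∀ i, X → EuclideanSpace ℝ (Fin (n i))) : Prop where
  subset : ∀ i, U i ⊆ S
  borel : ∀ i, MeasurableSet (U i)
  pos : ∀ i, 0 < m (U i)
  dimpos : ∀ i, 0 < n i
  cover : m (S \ ⋃ i, U i) = 0
  lip : ∀ i, IsLipschitzOn (φ i) (U i)
  diff : ∀ f : X → ℝ, IsLipschitzOn f S → ∀ i,
    ∀ᵐ x ∂(m.restrict (U i)), ∃! df, HasChartDerivAt S (φ i) f x df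

/-- `(S, d, m)` is a Lipschitz differentiability space. -/
def IsLDS {X : Type*} [MetricSpace X] [MeasurableSpace X]
    (m : Measure X) (S : Set X) : Prop :=
  ∃ (n : ℕ → ℕ) (U : ℕ → Set X) (φ : ∀ i, X → EuclideanSpace ℝ (Fin (n i))),
    LDSCharts m S n U φ

/-- `(X, d, m)` is locally bi-Lipschitz embeddable into Euclidean spaces. -/
def LocEuclEmbeddable {X : Type*} [MetricSpace X] [MeasurableSpace X]
    (m : Measure X) : Prop :=
  ∃ (N : ℕ → ℕ) (E : ℕ → Set X) (F : ∀ k, X → EuclideanSpace ℝ (Fin (N k))),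
    (∀ k, MeasurableSet (E k)) ∧ m (Set.univ \ ⋃ k, E k) = 0 ∧
    ∀ k, BiLipschitzOn (F k) (E k)

/-- The closed cone of width `θ` around the linear subspace `V`:
the union of the cones `C(w, θ) = {v | v ⬝ w ≥ cos θ ‖v‖}` over unit vectors `w ∈ V`. -/
def cone {N : ℕ} (V : Submodule ℝ (EuclideanSpace ℝ (Fin N))) (θ : ℝ) :
    Set (EuclideanSpace ℝ (Fin N)) :=
  {v | ∃ w ∈ V, ‖w‖ = 1 ∧ Real.cos θ * ‖v‖ ≤ ⟪w, v⟫}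

/-- The (topological) support of a measure: the set of points all of whose open
neighbourhoods have positive measure. -/
def msupport {X : Type*} [TopologicalSpace X] [MeasurableSpace X]
    (μ : Measure X) : Set X :=
  {x | ∀ U : Set X, IsOpen U → x ∈ U → 0 < μ U}

/-- The distance between two nonzero linear subspaces of `ℝ^N`:
`d(V, W) = inf {θ ∈ [0, π/2] | W ⊆ C(V, θ) and V ⊆ C(W, θ)}`. -/
def subDist {N : ℕ} (V W : Submodule ℝ (EuclideanSpace ℝ (Fin N))) : ℝ :=
  sInf {θ : ℝ | θ ∈ Set.Icc 0 (π / 2) ∧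
    (W : Set (EuclideanSpace ℝ (Fin N))) ⊆ cone V θ ∧
    (V : Set (EuclideanSpace ℝ (Fin N))) ⊆ cone W θ}

section SubDistAux

variable {N : ℕ}

/-- Orthogonal projection onto `V` as a continuous linear endomorphism. -/
def projCLM (V : Submodule ℝ (EuclideanSpace ℝ (Fin N))) :
    EuclideanSpace ℝ (Fin N) →L[ℝ] EuclideanSpace ℝ (Fin N) :=
  V.subtypeL.comp (Submodule.orthogonalProjectionOnto V)

lemma projCLM_apply (V : Submodule ℝ (EuclideanSpace ℝ (Fin N)))
    (x : EuclideanSpace ℝ (Fin N)) : projCLM V x = (Submodule.orthogonalProjectionOnto V x : _) := rfl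

lemma projCLM_mem (V : Submodule ℝ (EuclideanSpace ℝ (Fin N)))
    (x : EuclideanSpace ℝ (Fin N)) : projCLM V x ∈ V := (Submodule.orthogonalProjectionOnto V x).2

lemma projCLM_eq_self {V : Submodule ℝ (EuclideanSpace ℝ (Fin N))}
    {x : EuclideanSpace ℝ (Fin N)} (h : x ∈ V) : projCLM V x = x := by
  exact Submodule.starProjection_eq_self_iff.2 h

lemma sub_projCLM_mem (V : Submodule ℝ (EuclideanSpace ℝ (Fin N)))
    (x : EuclideanSpace ℝ (Fin N)) : x - projCLM V x ∈ Vᗮ :=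
  V.sub_starProjection_mem_orthogonal x

lemma inner_projCLM {V : Submodule ℝ (EuclideanSpace ℝ (Fin N))}
    {w : EuclideanSpace ℝ (Fin N)} (hw : w ∈ V) (x : EuclideanSpace ℝ (Fin N)) :
    ⟪w, x⟫ = ⟪w, projCLM V x⟫ := by
  have h : ⟪w, x - projCLM V x⟫ = 0 :=
    (Submodule.mem_orthogonal V _).1 (sub_projCLM_mem V x) w hw
  rw [inner_sub_right] at h
  linarith

lemma norm_sq_split (V : Submodule ℝ (EuclideanSpace ℝ (Fin N)))
    (x : EuclideanSpace ℝ (Fin N)) :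
    ‖x‖ ^ 2 = ‖projCLM V x‖ ^ 2 + ‖x - projCLM V x‖ ^ 2 := by
  have h : ⟪projCLM V x, x - projCLM V x⟫ = 0 :=
    (Submodule.mem_orthogonal V _).1 (sub_projCLM_mem V x) _ (projCLM_mem V x)
  have h2 := norm_add_sq_real (projCLM V x) (x - projCLM V x)
  rw [h] at h2
  simpa using h2

lemma le_of_sq_le_sq' {x y : ℝ} (hy : 0 ≤ y) (hx : 0 ≤ x) (h : x ^ 2 ≤ y ^ 2) : x ≤ y := by
  nlinarith

lemma norm_projCLM_le (V : Submodule ℝ (EuclideanSpace ℝ (Fin N)))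
    (x : EuclideanSpace ℝ (Fin N)) : ‖projCLM V x‖ ≤ ‖x‖ := by
  refine le_of_sq_le_sq' (norm_nonneg _) (norm_nonneg _) ?_
  nlinarith [norm_sq_split V x, sq_nonneg ‖x - projCLM V x‖]

lemma norm_sub_projCLM_le (V : Submodule ℝ (EuclideanSpace ℝ (Fin N)))
    (x : EuclideanSpace ℝ (Fin N)) : ‖x - projCLM V x‖ ≤ ‖x‖ := by
  refine le_of_sq_le_sq' (norm_nonneg _) (norm_nonneg _) ?_
  nlinarith [norm_sq_split V x, sq_nonneg ‖projCLM V x‖]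

lemma exists_unit {V : Submodule ℝ (EuclideanSpace ℝ (Fin N))} (h : V ≠ ⊥) :
    ∃ w, w ∈ V ∧ ‖w‖ = 1 := by
  obtain ⟨v, hv, hv0⟩ := Submodule.exists_mem_ne_zero_of_ne_bot h
  refine ⟨‖v‖⁻¹ • v, V.smul_mem _ hv, ?_⟩
  rw [norm_smul, norm_inv, norm_norm, inv_mul_cancel₀ (norm_ne_zero_iff.2 hv0)]

lemma mem_cone_iff {V : Submodule ℝ (EuclideanSpace ℝ (Fin N))} (hV : V ≠ ⊥) (θ : ℝ)
    (v : EuclideanSpace ℝ (Fin N)) :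
    v ∈ cone V θ ↔ Real.cos θ * ‖v‖ ≤ ‖projCLM V v‖ := by
  constructor
  · rintro ⟨w, hwV, hw1, hle⟩
    calc Real.cos θ * ‖v‖ ≤ ⟪w, v⟫ := hle
      _ = ⟪w, projCLM V v⟫ := inner_projCLM hwV v
      _ ≤ ‖w‖ * ‖projCLM V v‖ := real_inner_le_norm _ _
      _ = ‖projCLM V v‖ := by rw [hw1, one_mul]
  · intro h
    by_cases hz : projCLM V v = 0
    · obtain ⟨w, hwV, hw1⟩ := exists_unit hV
      refine ⟨w, hwV, hw1, ?_⟩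
      have hwv : ⟪w, v⟫ = 0 := by rw [inner_projCLM hwV v, hz, inner_zero_right]
      rw [hz, norm_zero] at h
      rw [hwv]; exact h
    · have hn : (0:ℝ) < ‖projCLM V v‖ := norm_pos_iff.2 hz
      refine ⟨‖projCLM V v‖⁻¹ • projCLM V v, V.smul_mem _ (projCLM_mem V v), ?_, ?_⟩
      · rw [norm_smul, norm_inv, norm_norm, inv_mul_cancel₀ hn.ne']
      · rw [real_inner_smul_left, inner_projCLM (projCLM_mem V v) v,
          real_inner_self_eq_norm_sq]
        calc Real.cos θ * ‖v‖ ≤ ‖projCLM V v‖ := h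
          _ = ‖projCLM V v‖⁻¹ * ‖projCLM V v‖ ^ 2 := by field_simp

/-- The defining set of `subDist`. -/
def DSet (V W : Submodule ℝ (EuclideanSpace ℝ (Fin N))) : Set ℝ :=
  {θ : ℝ | θ ∈ Set.Icc 0 (π / 2) ∧
    (W : Set (EuclideanSpace ℝ (Fin N))) ⊆ cone V θ ∧
    (V : Set (EuclideanSpace ℝ (Fin N))) ⊆ cone W θ}

lemma subDist_eq (V W : Submodule ℝ (EuclideanSpace ℝ (Fin N))) :
    subDist V W = sInf (DSet V W) := rfl

lemma DSet_bddBelow (V W : Submodule ℝ (EuclideanSpace ℝ (Fin N))) :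
    BddBelow (DSet V W) := ⟨0, fun θ hθ => hθ.1.1⟩

lemma subset_cone_pi_div_two {V : Submodule ℝ (EuclideanSpace ℝ (Fin N))} (hV : V ≠ ⊥)
    (s : Set (EuclideanSpace ℝ (Fin N))) : s ⊆ cone V (π / 2) := fun v _ =>
  (mem_cone_iff hV _ v).2 (by rw [Real.cos_pi_div_two, zero_mul]; exact norm_nonneg _)

lemma pi_div_two_mem {V W : Submodule ℝ (EuclideanSpace ℝ (Fin N))} (hV : V ≠ ⊥)
    (hW : W ≠ ⊥) : π / 2 ∈ DSet V W :=
  ⟨⟨by positivity, le_refl _⟩, subset_cone_pi_div_two hV _, subset_cone_pi_div_two hW _⟩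

lemma DSet_nonempty {V W : Submodule ℝ (EuclideanSpace ℝ (Fin N))} (hV : V ≠ ⊥)
    (hW : W ≠ ⊥) : (DSet V W).Nonempty := ⟨_, pi_div_two_mem hV hW⟩

lemma subDist_nonneg {V W : Submodule ℝ (EuclideanSpace ℝ (Fin N))} (hV : V ≠ ⊥)
    (hW : W ≠ ⊥) : 0 ≤ subDist V W :=
  le_csInf (DSet_nonempty hV hW) fun _ hθ => hθ.1.1

lemma subDist_le_pi_div_two {V W : Submodule ℝ (EuclideanSpace ℝ (Fin N))} (hV : V ≠ ⊥)
    (hW : W ≠ ⊥) : subDist V W ≤ π / 2 :=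
  csInf_le (DSet_bddBelow V W) (pi_div_two_mem hV hW)

lemma subDist_comm (V W : Submodule ℝ (EuclideanSpace ℝ (Fin N))) :
    subDist V W = subDist W V := by
  unfold subDist
  congr 1
  ext θ
  simp only [Set.mem_setOf_eq]
  tauto


lemma le_of_subDist_eq_zero {V W : Submodule ℝ (EuclideanSpace ℝ (Fin N))} (hV : V ≠ ⊥)
    (hW : W ≠ ⊥) (h : subDist V W = 0) : W ≤ V := by
  intro v hvW
  by_contra hvV
  have hv0 : v ≠ 0 := fun h0 => hvV (h0 ▸ V.zero_mem)
  have hvpos : (0:ℝ) < ‖v‖ := norm_pos_iff.2 hv0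
  have hsub : (0:ℝ) < ‖v - projCLM V v‖ :=
    norm_pos_iff.2 (sub_ne_zero.2 fun he => hvV (he ▸ projCLM_mem V v))
  have hlt : ‖projCLM V v‖ < ‖v‖ := by
    nlinarith [norm_sq_split V v, norm_nonneg (projCLM V v)]
  set c : ℝ := ‖projCLM V v‖ / ‖v‖ with hc
  have hc0 : 0 ≤ c := div_nonneg (norm_nonneg _) (norm_nonneg _)
  have hc1 : c < 1 := (div_lt_one hvpos).2 hlt
  have hε : 0 < Real.arccos c := Real.arccos_pos.2 hc1
  have hlt' : sInf (DSet V W) < Real.arccos c := by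
    rw [← subDist_eq, h]; exact hε
  obtain ⟨θ, hθS, hθlt⟩ := exists_lt_of_csInf_lt (DSet_nonempty hV hW) hlt'
  have hcos : Real.cos (Real.arccos c) < Real.cos θ :=
    Real.cos_lt_cos_of_nonneg_of_le_pi hθS.1.1 (Real.arccos_le_pi c) hθlt
  rw [Real.cos_arccos (by linarith) (by linarith)] at hcos
  have hmem := (mem_cone_iff hV θ v).1 (hθS.2.1 hvW)
  have hcv : c * ‖v‖ = ‖projCLM V v‖ := by rw [hc, div_mul_cancel₀ _ hvpos.ne']
  nlinarith

lemma subDist_self {V : Submodule ℝ (EuclideanSpace ℝ (Fin N))} (hV : V ≠ ⊥) :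
    subDist V V = 0 := by
  refine le_antisymm (csInf_le (DSet_bddBelow V V) ?_) (subDist_nonneg hV hV)
  have hself : (V : Set (EuclideanSpace ℝ (Fin N))) ⊆ cone V 0 := fun v hv =>
    (mem_cone_iff hV 0 v).2 (by rw [Real.cos_zero, one_mul, projCLM_eq_self hv])
  exact ⟨⟨le_refl 0, by positivity⟩, hself, hself⟩

lemma subDist_eq_zero_iff {V W : Submodule ℝ (EuclideanSpace ℝ (Fin N))} (hV : V ≠ ⊥)
    (hW : W ≠ ⊥) : subDist V W = 0 ↔ V = W := by
  constructor
  · intro h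
    refine le_antisymm ?_ (le_of_subDist_eq_zero hV hW h)
    exact le_of_subDist_eq_zero hW hV (by rw [← subDist_comm]; exact h)
  · rintro rfl
    exact subDist_self hV

lemma inner_ineq {u w v : EuclideanSpace ℝ (Fin N)} (hu : ‖u‖ = 1) (hw : ‖w‖ = 1)
    {α β : ℝ} (hα : α ∈ Set.Icc 0 (π / 2)) (hβ : β ∈ Set.Icc 0 (π / 2))
    (h1 : Real.cos α ≤ ⟪u, w⟫) (h2 : Real.cos β * ‖v‖ ≤ ⟪w, v⟫) :
    Real.cos (α + β) * ‖v‖ ≤ ⟪u, v⟫ := by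
  have hca : 0 ≤ Real.cos α :=
    Real.cos_nonneg_of_mem_Icc ⟨by linarith [hα.1, Real.pi_pos], hα.2⟩
  have hcb : 0 ≤ Real.cos β :=
    Real.cos_nonneg_of_mem_Icc ⟨by linarith [hβ.1, Real.pi_pos], hβ.2⟩
  have hsa : 0 ≤ Real.sin α :=
    Real.sin_nonneg_of_nonneg_of_le_pi hα.1 (by linarith [hα.2, Real.pi_pos])
  have hsb : 0 ≤ Real.sin β :=
    Real.sin_nonneg_of_nonneg_of_le_pi hβ.1 (by linarith [hβ.2, Real.pi_pos])
  have hww : ⟪w, w⟫ = (1:ℝ) := by rw [real_inner_self_eq_norm_sq, hw]; norm_num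
  have key : ⟪u - ⟪u, w⟫ • w, v - ⟪w, v⟫ • w⟫ = ⟪u, v⟫ - ⟪u, w⟫ * ⟪w, v⟫ := by
    rw [inner_sub_left, inner_sub_right, inner_sub_right, real_inner_smul_left,
      real_inner_smul_left, real_inner_smul_right, real_inner_smul_right, hww,
      real_inner_comm w u]
    ring
  have hnu : ‖u - ⟪u, w⟫ • w‖ ^ 2 = 1 - ⟪u, w⟫ ^ 2 := by
    rw [norm_sub_sq_real, real_inner_smul_right, norm_smul, hu, hw]
    simp [Real.norm_eq_abs, sq_abs]
    ring
  have hnv : ‖v - ⟪w, v⟫ • w‖ ^ 2 = ‖v‖ ^ 2 - ⟪w, v⟫ ^ 2 := by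
    rw [norm_sub_sq_real, real_inner_smul_right, norm_smul, hw, real_inner_comm v w]
    simp [Real.norm_eq_abs, sq_abs]
    ring
  have ha1 : ⟪u, w⟫ ≤ 1 := by
    have := real_inner_le_norm u w; rw [hu, hw, one_mul] at this; exact this
  have hb1 : ⟪w, v⟫ ≤ ‖v‖ := by
    have := real_inner_le_norm w v; rw [hw, one_mul] at this; exact this
  have h3 : -(‖u - ⟪u, w⟫ • w‖ * ‖v - ⟪w, v⟫ • w‖) ≤ ⟪u - ⟪u, w⟫ • w, v - ⟪w, v⟫ • w⟫ :=
    neg_le_of_abs_le (abs_real_inner_le_norm _ _)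
  have h4 : ‖u - ⟪u, w⟫ • w‖ ≤ Real.sin α := by
    refine le_of_sq_le_sq' hsa (norm_nonneg _) ?_
    rw [hnu]
    nlinarith [Real.sin_sq_add_cos_sq α]
  have h5 : ‖v - ⟪w, v⟫ • w‖ ≤ Real.sin β * ‖v‖ := by
    refine le_of_sq_le_sq' (by positivity) (norm_nonneg _) ?_
    rw [hnv]
    nlinarith [Real.sin_sq_add_cos_sq β, mul_nonneg hcb (norm_nonneg v)]
  have hab : Real.cos α * (Real.cos β * ‖v‖) ≤ ⟪u, w⟫ * ⟪w, v⟫ :=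
    mul_le_mul h1 h2 (mul_nonneg hcb (norm_nonneg v)) (le_trans hca h1)
  have hprod : ‖u - ⟪u, w⟫ • w‖ * ‖v - ⟪w, v⟫ • w‖ ≤ Real.sin α * (Real.sin β * ‖v‖) :=
    mul_le_mul h4 h5 (norm_nonneg _) hsa
  have hfin : Real.cos (α + β) * ‖v‖ =
      Real.cos α * (Real.cos β * ‖v‖) - Real.sin α * (Real.sin β * ‖v‖) := by
    rw [Real.cos_add]; ring
  linarith [key.le, key.symm.le]

lemma subDist_le_add {U V W : Submodule ℝ (EuclideanSpace ℝ (Fin N))}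
    (hU : U ≠ ⊥) (hV : V ≠ ⊥) (hW : W ≠ ⊥) {θ₁ θ₂ : ℝ}
    (hθ₁ : θ₁ ∈ DSet U V) (hθ₂ : θ₂ ∈ DSet V W) : subDist U W ≤ θ₁ + θ₂ := by
  by_cases hsum : θ₁ + θ₂ ≤ π / 2
  · refine csInf_le (DSet_bddBelow U W) ⟨⟨by linarith [hθ₁.1.1, hθ₂.1.1], hsum⟩, ?_, ?_⟩
    · intro v hv
      obtain ⟨w, hwV, hw1, h2⟩ := hθ₂.2.1 hv
      obtain ⟨z, hzU, hz1, h1⟩ := hθ₁.2.1 hwV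
      rw [hw1, mul_one] at h1
      exact ⟨z, hzU, hz1, inner_ineq hz1 hw1 hθ₁.1 hθ₂.1 h1 h2⟩
    · intro v hv
      obtain ⟨w, hwV, hw1, h2⟩ := hθ₁.2.2 hv
      obtain ⟨z, hzW, hz1, h1⟩ := hθ₂.2.2 hwV
      rw [hw1, mul_one] at h1
      refine ⟨z, hzW, hz1, ?_⟩
      rw [add_comm]
      exact inner_ineq hz1 hw1 hθ₂.1 hθ₁.1 h1 h2
  · exact le_trans (subDist_le_pi_div_two hU hW) (by linarith)

lemma subDist_triangle {U V W : Submodule ℝ (EuclideanSpace ℝ (Fin N))}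
    (hU : U ≠ ⊥) (hV : V ≠ ⊥) (hW : W ≠ ⊥) :
    subDist U W ≤ subDist U V + subDist V W := by
  have h2 : subDist U W - subDist U V ≤ subDist V W := by
    refine le_csInf (DSet_nonempty hV hW) fun θ₂ hθ₂ => ?_
    have h1 : subDist U W - θ₂ ≤ subDist U V := by
      refine le_csInf (DSet_nonempty hU hV) fun θ₁ hθ₁ => ?_
      linarith [subDist_le_add hU hV hW hθ₁ hθ₂]
    linarith
  linarith

lemma proj_orth_small {V W : Submodule ℝ (EuclideanSpace ℝ (Fin N))} (hW : W ≠ ⊥) {θ : ℝ}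
    (hθ : θ ∈ Set.Icc 0 (π / 2))
    (hVW : (V : Set (EuclideanSpace ℝ (Fin N))) ⊆ cone W θ)
    {z : EuclideanSpace ℝ (Fin N)} (hz : z ∈ Wᗮ) :
    ‖projCLM V z‖ ≤ Real.sin θ * ‖z‖ := by
  have hsθ : 0 ≤ Real.sin θ :=
    Real.sin_nonneg_of_nonneg_of_le_pi hθ.1 (by linarith [hθ.2, Real.pi_pos])
  by_cases h0 : projCLM V z = 0
  · rw [h0, norm_zero]; positivity
  · have hn : (0:ℝ) < ‖projCLM V z‖ := norm_pos_iff.2 h0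
    set u : EuclideanSpace ℝ (Fin N) := ‖projCLM V z‖⁻¹ • projCLM V z with hudef
    have hu1 : ‖u‖ = 1 := by
      rw [hudef, norm_smul, norm_inv, norm_norm, inv_mul_cancel₀ hn.ne']
    have huV : u ∈ V := V.smul_mem _ (projCLM_mem V z)
    have hcθ : 0 ≤ Real.cos θ :=
      Real.cos_nonneg_of_mem_Icc ⟨by linarith [hθ.1, Real.pi_pos], hθ.2⟩
    have hcone := (mem_cone_iff hW θ u).1 (hVW huV)
    rw [hu1, mul_one] at hcone
    have hjoint : ‖u - projCLM W u‖ ^ 2 ≤ Real.sin θ ^ 2 := by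
      have hspl := norm_sq_split W u
      rw [hu1] at hspl
      nlinarith [Real.sin_sq_add_cos_sq θ]
    have h4 : ‖u - projCLM W u‖ ≤ Real.sin θ :=
      le_of_sq_le_sq' hsθ (norm_nonneg _) hjoint
    have hiz : ⟪u, z⟫ = ‖projCLM V z‖ := by
      rw [hudef, real_inner_smul_left, inner_projCLM (projCLM_mem V z) z,
        real_inner_self_eq_norm_sq]
      field_simp
    have hPWz : ⟪projCLM W u, z⟫ = 0 :=
      (Submodule.mem_orthogonal W z).1 hz _ (projCLM_mem W u)
    have hsplit : ⟪u - projCLM W u, z⟫ = ⟪u, z⟫ := by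
      rw [inner_sub_left, hPWz]; ring
    calc ‖projCLM V z‖ = ⟪u - projCLM W u, z⟫ := by rw [hsplit, hiz]
      _ ≤ ‖u - projCLM W u‖ * ‖z‖ := real_inner_le_norm _ _
      _ ≤ Real.sin θ * ‖z‖ := mul_le_mul_of_nonneg_right h4 (norm_nonneg z)

lemma proj_move_small {V W : Submodule ℝ (EuclideanSpace ℝ (Fin N))} (hV : V ≠ ⊥) {θ : ℝ}
    (hθ : θ ∈ Set.Icc 0 (π / 2))
    (hWV : (W : Set (EuclideanSpace ℝ (Fin N))) ⊆ cone V θ)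
    {v : EuclideanSpace ℝ (Fin N)} (hv : v ∈ W) :
    ‖projCLM V v - v‖ ≤ Real.sin θ * ‖v‖ := by
  have hsθ : 0 ≤ Real.sin θ :=
    Real.sin_nonneg_of_nonneg_of_le_pi hθ.1 (by linarith [hθ.2, Real.pi_pos])
  have hcθ : 0 ≤ Real.cos θ :=
    Real.cos_nonneg_of_mem_Icc ⟨by linarith [hθ.1, Real.pi_pos], hθ.2⟩
  have h := (mem_cone_iff hV θ v).1 (hWV hv)
  have hspl := norm_sq_split V v
  rw [norm_sub_rev]
  refine le_of_sq_le_sq' (by positivity) (norm_nonneg _) ?_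
  have hc2 : (Real.cos θ * ‖v‖) ^ 2 ≤ ‖projCLM V v‖ ^ 2 := by
    nlinarith [mul_nonneg hcθ (norm_nonneg v)]
  nlinarith [Real.sin_sq_add_cos_sq θ]

lemma gap_le {V W : Submodule ℝ (EuclideanSpace ℝ (Fin N))} (hV : V ≠ ⊥) (hW : W ≠ ⊥)
    {θ : ℝ} (hθ : θ ∈ DSet V W) : ‖projCLM V - projCLM W‖ ≤ 2 * Real.sin θ := by
  have hsθ : 0 ≤ Real.sin θ :=
    Real.sin_nonneg_of_nonneg_of_le_pi hθ.1.1 (by linarith [hθ.1.2, Real.pi_pos])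
  refine ContinuousLinearMap.opNorm_le_bound _ (by linarith) fun x => ?_
  have key : (projCLM V - projCLM W) x =
      projCLM V (x - projCLM W x) + (projCLM V (projCLM W x) - projCLM W x) := by
    simp only [ContinuousLinearMap.sub_apply, map_sub]
    abel
  rw [key]
  have h1 : ‖projCLM V (x - projCLM W x)‖ ≤ Real.sin θ * ‖x - projCLM W x‖ :=
    proj_orth_small hW hθ.1 hθ.2.2 (sub_projCLM_mem W x)
  have h2 : ‖projCLM V (projCLM W x) - projCLM W x‖ ≤ Real.sin θ * ‖projCLM W x‖ :=
    proj_move_small hV hθ.1 hθ.2.1 (projCLM_mem W x)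
  have h3 := norm_sub_projCLM_le W x
  have h4 := norm_projCLM_le W x
  calc ‖projCLM V (x - projCLM W x) + (projCLM V (projCLM W x) - projCLM W x)‖
      ≤ ‖projCLM V (x - projCLM W x)‖ + ‖projCLM V (projCLM W x) - projCLM W x‖ :=
        norm_add_le _ _
    _ ≤ 2 * Real.sin θ * ‖x‖ := by nlinarith

lemma subset_cone_of_gap {V W : Submodule ℝ (EuclideanSpace ℝ (Fin N))} (hV : V ≠ ⊥)
    {θ : ℝ} (hc : Real.cos θ = 1 - ‖projCLM V - projCLM W‖) :
    (W : Set (EuclideanSpace ℝ (Fin N))) ⊆ cone V θ := by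
  intro v hv
  refine (mem_cone_iff hV θ v).2 ?_
  rw [hc]
  have hPW : projCLM W v = v := projCLM_eq_self hv
  have hb : ‖projCLM W v - projCLM V v‖ ≤ ‖projCLM V - projCLM W‖ * ‖v‖ := by
    have h := (projCLM W - projCLM V).le_opNorm v
    rw [ContinuousLinearMap.sub_apply] at h
    rw [norm_sub_rev (projCLM V) (projCLM W)]
    exact h
  have h2 := norm_sub_norm_le (projCLM W v) (projCLM V v)
  rw [hPW] at h2 hb
  nlinarith [norm_nonneg v]

lemma projCLM_norm_le_one (V : Submodule ℝ (EuclideanSpace ℝ (Fin N))) :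
    ‖projCLM V‖ ≤ 1 :=
  ContinuousLinearMap.opNorm_le_bound _ zero_le_one fun x => by
    rw [one_mul]; exact norm_projCLM_le V x

lemma subDist_le_arccos_gap {V W : Submodule ℝ (EuclideanSpace ℝ (Fin N))} (hV : V ≠ ⊥)
    (hW : W ≠ ⊥) : subDist V W ≤ Real.arccos (1 - ‖projCLM V - projCLM W‖) := by
  set δ : ℝ := ‖projCLM V - projCLM W‖ with hδdef
  have hδ0 : 0 ≤ δ := norm_nonneg _
  have hδ2 : δ ≤ 2 := by
    calc δ ≤ ‖projCLM V‖ + ‖projCLM W‖ := norm_sub_le _ _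
      _ ≤ 2 := by linarith [projCLM_norm_le_one (N := N) V, projCLM_norm_le_one (N := N) W]
  by_cases hδ1 : δ ≤ 1
  · have hIcc : Real.arccos (1 - δ) ∈ Set.Icc 0 (π / 2) :=
      ⟨Real.arccos_nonneg _, Real.arccos_le_pi_div_two.2 (by linarith)⟩
    have hcos : Real.cos (Real.arccos (1 - δ)) = 1 - δ :=
      Real.cos_arccos (by linarith) (by linarith)
    refine csInf_le (DSet_bddBelow V W) ⟨hIcc, ?_, ?_⟩
    · exact subset_cone_of_gap hV (by rw [hcos])
    · refine subset_cone_of_gap hW ?_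
      rw [hcos, norm_sub_rev]
  · have h1 : 1 - δ ≤ 0 := by linarith
    have h2 : π / 2 ≤ Real.arccos (1 - δ) := by
      rw [Real.arccos_eq_pi_div_two_sub_arcsin]
      have := Real.arcsin_nonpos.2 h1
      linarith
    exact le_trans (subDist_le_pi_div_two hV hW) h2

lemma projCLM_norm_one {V : Submodule ℝ (EuclideanSpace ℝ (Fin N))} (hV : V ≠ ⊥) :
    ‖projCLM V‖ = 1 := by
  refine le_antisymm (projCLM_norm_le_one V) ?_
  obtain ⟨w, hwV, hw1⟩ := exists_unit hV
  have h := (projCLM V).le_opNorm w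
  rw [projCLM_eq_self hwV, hw1, mul_one] at h
  exact h

lemma projCLM_idem (V : Submodule ℝ (EuclideanSpace ℝ (Fin N))) (x : EuclideanSpace ℝ (Fin N)) :
    projCLM V (projCLM V x) = projCLM V x := projCLM_eq_self (projCLM_mem V x)

lemma projCLM_symm (V : Submodule ℝ (EuclideanSpace ℝ (Fin N)))
    (x y : EuclideanSpace ℝ (Fin N)) : ⟪projCLM V x, y⟫ = ⟪x, projCLM V y⟫ := by
  rw [inner_projCLM (projCLM_mem V x) y, real_inner_comm (projCLM V y) x,
    inner_projCLM (projCLM_mem V y) x]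
  exact real_inner_comm _ _

lemma subDist_complete (u : ℕ → Submodule ℝ (EuclideanSpace ℝ (Fin N)))
    (hb : ∀ k, u k ≠ ⊥)
    (hC : ∀ ε : ℝ, 0 < ε → ∃ M : ℕ, ∀ p ≥ M, ∀ q ≥ M, subDist (u p) (u q) < ε) :
    ∃ V : Submodule ℝ (EuclideanSpace ℝ (Fin N)), V ≠ ⊥ ∧
      Tendsto (fun k => subDist (u k) V) atTop (𝓝 0) := by
  have hcauchy : CauchySeq (fun k => projCLM (u k)) := by
    refine Metric.cauchySeq_iff.2 fun ε hε => ?_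
    obtain ⟨M, hM⟩ := hC (ε / 4) (by linarith)
    refine ⟨M, fun p hp q hq => ?_⟩
    have hM' : sInf (DSet (u p) (u q)) < ε / 4 := by
      rw [← subDist_eq]; exact hM p hp q hq
    obtain ⟨θ, hθS, hθlt⟩ := exists_lt_of_csInf_lt (DSet_nonempty (hb p) (hb q)) hM'
    have hgap := gap_le (hb p) (hb q) hθS
    have hsin : Real.sin θ ≤ θ := Real.sin_le hθS.1.1
    rw [dist_eq_norm]
    calc ‖projCLM (u p) - projCLM (u q)‖ ≤ 2 * Real.sin θ := hgap
      _ < ε := by linarith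
  obtain ⟨T, hT⟩ := cauchySeq_tendsto_of_complete hcauchy
  have happly : ∀ x, Tendsto (fun k => projCLM (u k) x) atTop (𝓝 (T x)) := fun x =>
    ((ContinuousLinearMap.apply ℝ (EuclideanSpace ℝ (Fin N)) x).continuous.tendsto T).comp hT
  have hidem : ∀ x, T (T x) = T x := by
    intro x
    have h1 : Tendsto (fun k => projCLM (u k) (T x)) atTop (𝓝 (T (T x))) := happly (T x)
    have hz : Tendsto (fun k => projCLM (u k) (T x) - projCLM (u k) x) atTop (𝓝 0) := by
      have hg : Tendsto (fun k => ‖T x - projCLM (u k) x‖) atTop (𝓝 0) := by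
        have := tendsto_iff_norm_sub_tendsto_zero.1 (happly x)
        simpa [norm_sub_rev] using this
      refine squeeze_zero_norm (fun k => ?_) hg
      have hrw : projCLM (u k) (T x) - projCLM (u k) x
          = projCLM (u k) (T x - projCLM (u k) x) := by
        rw [map_sub]
        rw [projCLM_idem (u k) x]
      rw [hrw]
      exact norm_projCLM_le _ _
    have h2 : Tendsto (fun k => projCLM (u k) (T x)) atTop (𝓝 (T x)) := by
      have := hz.add (happly x)
      simpa using this
    exact tendsto_nhds_unique h1 h2
  have hsymm : ∀ x y, ⟪T x, y⟫ = ⟪x, T y⟫ := by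
    intro x y
    have h1 : Tendsto (fun k => ⟪projCLM (u k) x, y⟫) atTop (𝓝 ⟪T x, y⟫) :=
      (happly x).inner tendsto_const_nhds
    have h2 : Tendsto (fun k => ⟪x, projCLM (u k) y⟫) atTop (𝓝 ⟪x, T y⟫) :=
      tendsto_const_nhds.inner (happly y)
    have heq : (fun k => ⟪projCLM (u k) x, y⟫) = fun k => ⟪x, projCLM (u k) y⟫ :=
      funext fun k => projCLM_symm (u k) x y
    rw [heq] at h1
    exact tendsto_nhds_unique h1 h2
  have hTnorm : ‖T‖ = 1 := by
    have h1 : Tendsto (fun k => ‖projCLM (u k)‖) atTop (𝓝 ‖T‖) := hT.norm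
    have heq : (fun k => ‖projCLM (u k)‖) = fun _ => (1 : ℝ) :=
      funext fun k => projCLM_norm_one (hb k)
    rw [heq] at h1
    exact tendsto_nhds_unique h1 tendsto_const_nhds
  set V : Submodule ℝ (EuclideanSpace ℝ (Fin N)) := LinearMap.range (T : EuclideanSpace ℝ (Fin N) →ₗ[ℝ] EuclideanSpace ℝ (Fin N)) with hVdef
  have hTmemV : ∀ x, T x ∈ V := fun x => ⟨x, rfl⟩
  have hVne : V ≠ ⊥ := by
    intro hbot
    have hzero : ∀ x, T x = 0 := fun x => by
      have hx := hTmemV x; rw [hbot] at hx; simpa using hx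
    have hT0 : T = 0 := ContinuousLinearMap.ext fun x => hzero x
    rw [hT0, norm_zero] at hTnorm
    exact zero_ne_one hTnorm
  have hPV : projCLM V = T := by
    refine ContinuousLinearMap.ext fun x => ?_
    have hkey : (Submodule.orthogonalProjectionOnto V x : EuclideanSpace ℝ (Fin N)) = T x := by
      refine Submodule.eq_starProjection_of_mem_of_inner_eq_zero (hTmemV x) fun w hw => ?_
      obtain ⟨y, rfl⟩ := hw
      have h0 : T (x - T x) = 0 := by rw [map_sub, hidem x, sub_self]
      erw [← hsymm (x - T x) y, h0, inner_zero_left]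
    exact hkey
  refine ⟨V, hVne, ?_⟩
  have hdist : Tendsto (fun k => ‖projCLM (u k) - projCLM V‖) atTop (𝓝 0) := by
    rw [hPV]
    exact tendsto_iff_norm_sub_tendsto_zero.1 hT
  have harccos : Tendsto (fun k => Real.arccos (1 - ‖projCLM (u k) - projCLM V‖))
      atTop (𝓝 0) := by
    have hcont : Continuous fun δ : ℝ => Real.arccos (1 - δ) :=
      Real.continuous_arccos.comp (continuous_const.sub continuous_id)
    have hcomp := (hcont.tendsto 0).comp hdist
    simpa only [Function.comp_def, sub_zero, Real.arccos_one] using hcomp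
  exact squeeze_zero (fun k => subDist_nonneg (hb k) hVne)
    (fun k => subDist_le_arccos_gap (hb k) hVne) harccos

lemma subDist_orthogonal {V : Submodule ℝ (EuclideanSpace ℝ (Fin N))} (hV : V ≠ ⊥)
    (hV' : V ≠ ⊤) : subDist V Vᗮ = π / 2 := by
  have hVo : Vᗮ ≠ ⊥ := fun h => hV' (Submodule.orthogonal_eq_bot_iff.1 h)
  refine le_antisymm (subDist_le_pi_div_two hV hVo) ?_
  refine le_csInf (DSet_nonempty hV hVo) fun θ hθ => ?_
  obtain ⟨v, hvVo, hv1⟩ := exists_unit hVo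
  have h := (mem_cone_iff hV θ v).1 (hθ.2.1 hvVo)
  have hPz : projCLM V v = 0 := by
    have := Submodule.orthogonalProjectionOnto_eq_zero_iff.2 hvVo
    rw [projCLM_apply, this]
    simp
  rw [hPz, norm_zero, hv1, mul_one] at h
  by_contra hlt
  push_neg at hlt
  have hpos : 0 < Real.cos θ :=
    Real.cos_pos_of_mem_Ioo ⟨by linarith [hθ.1.1, Real.pi_pos], hlt⟩
  linarith

end SubDistAux

/-- On the collection `S(ℝ^N)` of nonzero linear subspaces of `ℝ^N`,
`subDist` is a complete metric (nonnegative, symmetric, vanishing exactly on the diagonal,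
satisfying the triangle inequality, and every Cauchy sequence converges); moreover
`d(V, W) ≤ π/2` always, and `d(V, V^⊥) = π/2` whenever `0 < dim V < N`
(i.e. `V ≠ ⊥` and `V ≠ ⊤`). -/
theorem stmt10 (N : ℕ) (hN : 0 < N) :
    (∀ V W : Submodule ℝ (EuclideanSpace ℝ (Fin N)), V ≠ ⊥ → W ≠ ⊥ →
      0 ≤ subDist V W ∧ subDist V W ≤ π / 2 ∧ subDist V W = subDist W V ∧
        (subDist V W = 0 ↔ V = W)) ∧
    (∀ U V W : Submodule ℝ (EuclideanSpace ℝ (Fin N)), U ≠ ⊥ → V ≠ ⊥ → W ≠ ⊥ →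
      subDist U W ≤ subDist U V + subDist V W) ∧
    (∀ u : ℕ → Submodule ℝ (EuclideanSpace ℝ (Fin N)), (∀ k, u k ≠ ⊥) →
      (∀ ε : ℝ, 0 < ε → ∃ M : ℕ, ∀ p ≥ M, ∀ q ≥ M, subDist (u p) (u q) < ε) →
      ∃ V : Submodule ℝ (EuclideanSpace ℝ (Fin N)), V ≠ ⊥ ∧
        Tendsto (fun k => subDist (u k) V) atTop (𝓝 0)) ∧
    (∀ V : Submodule ℝ (EuclideanSpace ℝ (Fin N)), V ≠ ⊥ → V ≠ ⊤ →
      subDist V Vᗮ = π / 2) := by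
  exact ⟨fun V W hV hW => ⟨subDist_nonneg hV hW, subDist_le_pi_div_two hV hW,
      subDist_comm V W, subDist_eq_zero_iff hV hW⟩,
    fun U V W hU hV hW => subDist_triangle hU hV hW,
    fun u hb hC => subDist_complete u hb hC,
    fun V hV hV' => subDist_orthogonal hV hV'⟩
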